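/- arXiv:2301.06868 — 4 statements merged into one kernel-verified Lean document; each statement's English description precedes it below -/
import Mathlib

section
/- If a d-dimensional configuration c : ℤ^d → A (A ⊆ ℤ finite) has a non-zero annihilator f with complex coefficients, then it also has an annihilator f' with integer coefficients satisfying Supp(f') = Supp(f). -/
open scoped BigOperators

/-- A cell of the `d`-dimensional grid `ℤ^d`. -/
abbrev Cell (d : ℕ) := Fin d → ℤ

/-- A `d`-dimensional configuration with integer symbols. -/
abbrev Config (d : ℕ) := Cell d → ℤ

/-- Laurent polynomials in `d` variables with complex coefficients,
modelled as the monoid algebra of `ℤ^d` over `ℂ`. -/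
abbrev LP (d : ℕ) := AddMonoidAlgebra ℂ (Cell d)

/-- The real (Euclidean) vector corresponding to an integer lattice vector. -/
noncomputable def toR {d : ℕ} (v : Cell d) : EuclideanSpace ℝ (Fin d) :=
  WithLp.toLp 2 (fun i => (v i : ℝ))

/-- The formal product `f·c` of a Laurent polynomial and a configuration:
`(fc)_u = Σ_{v ∈ Supp(f)} f_v c_{u-v}`. -/
noncomputable def conv {d : ℕ} (f : LP d) (c : Config d) : Cell d → ℂ :=
  fun u => ∑ v ∈ f.coeff.support, f.coeff v * (c (u - v) : ℂ)

/-- `f` annihilates `c`: the formal product `f·c` is the zero power series. -/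
def Annihilates {d : ℕ} (f : LP d) (c : Config d) : Prop :=
  ∀ u, conv f c u = 0

/-- `t` is a vector of periodicity of `e`. -/
def IsPeriodOf {d : ℕ} {α : Type*} (e : Cell d → α) (t : Cell d) : Prop :=
  t ≠ 0 ∧ ∀ u, e (u + t) = e u

/-- `e` is strongly periodic: it has `d` vectors of periodicity that are
linearly independent over `ℝ`. -/
def StronglyPeriodic {d : ℕ} {α : Type*} (e : Cell d → α) : Prop :=
  ∃ T : Fin d → Cell d, (∀ i, IsPeriodOf e (T i)) ∧
    LinearIndependent ℝ (fun i => (fun j => ((T i j : ℤ) : ℝ)))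

/-- `f` periodizes `c`: the formal product `f·c` is strongly periodic,
i.e. `f ∈ Per(c)`. -/
def Periodizes {d : ℕ} (f : LP d) (c : Config d) : Prop :=
  StronglyPeriodic (conv f c)

/-- The translation of a configuration by `t`. -/
def shift {d : ℕ} (t : Cell d) (c : Config d) : Config d := fun u => c (u + t)

/-- A subshift: a set of configurations closed in the prodiscrete topology
and closed under translations. -/
def IsSubshift {d : ℕ} (X : Set (Config d)) : Prop :=
  IsClosed X ∧ ∀ c ∈ X, ∀ t : Cell d, shift t c ∈ X

/-- All configurations of `X` use symbols from one finite alphabet `A ⊆ ℤ`. -/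
def FiniteAlphabet {d : ℕ} (X : Set (Config d)) : Prop :=
  ∃ A : Finset ℤ, ∀ c ∈ X, ∀ u, c u ∈ A

/-- `f ∈ Ann(X)`: `f` annihilates every configuration of `X`. -/
def AnnX {d : ℕ} (f : LP d) (X : Set (Config d)) : Prop :=
  ∀ c ∈ X, Annihilates f c

/-- `f ∈ Per(X)`: `f` periodizes every configuration of `X`. -/
def PerX {d : ℕ} (f : LP d) (X : Set (Config d)) : Prop :=
  ∀ c ∈ X, Periodizes f c

/-- The difference binomial `x^t - 1`. -/
noncomputable def binom {d : ℕ} (t : Cell d) : LP d :=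
  AddMonoidAlgebra.single t 1 - AddMonoidAlgebra.single 0 1

/-- `X` is deterministic in the direction of `u`: the contents of a
configuration on the open discrete half space `H_u = {x ∈ ℤ^d : ⟨x,u⟩ < 0}`
determine the configuration completely. -/
def Deterministic {d : ℕ} (X : Set (Config d)) (u : EuclideanSpace ℝ (Fin d)) : Prop :=
  ∀ c ∈ X, ∀ c' ∈ X, (∀ x : Cell d, (inner ℝ (toR x) u : ℝ) < 0 → c x = c' x) → c = c'

/-- The `(d-1)`-dimensional subspace `S = ⟨u⟩^⊥` is expansive for `X`: `X` is
deterministic in the directions of both `u` and `-u`. -/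
def ExpansiveSpace {d : ℕ} (X : Set (Config d))
    (S : Submodule ℝ (EuclideanSpace ℝ (Fin d))) : Prop :=
  ∃ u : EuclideanSpace ℝ (Fin d), u ≠ 0 ∧ S = (Submodule.span ℝ {u})ᗮ ∧
    Deterministic X u ∧ Deterministic X (-u)

/-- Vectors `a` and `b` of `ℤ^d` are parallel. -/
def IsParallel {d : ℕ} (a b : Cell d) : Prop :=
  ∃ p q : ℤ, p ≠ 0 ∧ q ≠ 0 ∧ p • a = q • b

/-- A family of lattice vectors is pairwise linearly independent (over `ℝ`). -/
def PairwiseLinIndep {d m : ℕ} (t : Fin m → Cell d) : Prop :=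
  ∀ i j, i ≠ j → LinearIndependent ℝ ![toR (t i), toR (t j)]

/-- The set of `D`-patterns appearing in the configuration `c`. -/
def PattSetC {d : ℕ} (c : Config d) (D : Finset (Cell d)) : Set (D → ℤ) :=
  {p | ∃ t : Cell d, ∀ v : D, p v = c (t + v)}

/-- The set of `D`-patterns appearing in configurations of `X`. -/
def PattSet {d : ℕ} (X : Set (Config d)) (D : Finset (Cell d)) : Set (D → ℤ) :=
  {p | ∃ c ∈ X, ∃ t : Cell d, ∀ v : D, p v = c (t + v)}

/-- `c` is a tiling of `ℤ^d` by translations of the tile `D`: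
`c` is binary and every cell is covered exactly once, i.e.
`Σ_{v ∈ D} c_{u-v} = 1` for every `u`. -/
def IsTiling {d : ℕ} (D : Finset (Cell d)) (c : Config d) : Prop :=
  (∀ u, c u = 0 ∨ c u = 1) ∧ ∀ u : Cell d, ∑ v ∈ D, c (u - v) = 1

/-- The set `T_D` of all tilings of `ℤ^d` by translations of `D`. -/
def TilingSet {d : ℕ} (D : Finset (Cell d)) : Set (Config d) :=
  {c | IsTiling D c}

/-- The characteristic Laurent polynomial `f_D = Σ_{v ∈ D} x^v` of a finite shape. -/
noncomputable def charPoly {d : ℕ} (D : Finset (Cell d)) : LP d :=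
  ∑ v ∈ D, AddMonoidAlgebra.single v 1

/-- The radius-`r` Lee sphere `B_r^d = {v ∈ ℤ^d : |v 1| + ⋯ + |v d| ≤ r}`. -/
noncomputable def LeeSphere (d : ℕ) (r : ℤ) : Finset (Cell d) :=
  (Fintype.piFinset fun _ : Fin d => Finset.Icc (-r) r).filter fun v => ∑ i, |v i| ≤ r

/-!
Annihilation of `c` by Laurent polynomials supported in `s = Supp(f)` is a homogeneous linear
system with integer coefficients `c (u - v)` in the unknowns `(f_v)_{v ∈ s}`. If a complex
solution has `f_v ≠ 0`, the coordinate vector `e_v` is not a rational combination of the rows,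
so a rational functional killing all rows but not `e_v` yields a rational solution nonzero at
`v`. Since `ℚ` is infinite, the rational solution space is not covered by the finitely many
hyperplanes `x_v = 0`, so some rational solution vanishes nowhere on `s`; clearing denominators
gives the integer annihilator.
-/

open Matrix

namespace Matrix

variable {α ι K L : Type*} [Fintype ι] [Field K] [Field L] [Algebra K L]

theorem exists_mulVec_eq_zero_apply_ne_zero (M : Matrix α ι K) {x : ι → L}
    (hx : M.map (algebraMap K L) *ᵥ x = 0) {i : ι} (hi : x i ≠ 0) :
    ∃ y : ι → K, M *ᵥ y = 0 ∧ y i ≠ 0 := by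
  classical
  set rows := Submodule.span K (Set.range M)
  have rows_le : rows ≤ LinearMap.ker (Fintype.linearCombination K x) := by
    refine Submodule.span_le.2 (Set.range_subset_iff.2 fun a => ?_)
    simpa [Fintype.linearCombination_apply, Algebra.smul_def, mulVec, dotProduct]
      using congrFun hx a
  have single_notMem : Pi.single i 1 ∉ rows := fun h => hi <| by
    simpa [Fintype.linearCombination_apply_single] using rows_le h
  obtain ⟨g, hgi, hg⟩ := Submodule.exists_dual_map_eq_bot_of_notMem single_notMem inferInstance
  refine ⟨fun j => g (Pi.single j 1), funext fun a => ?_, hgi⟩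
  have hga : g (M a) = 0 := by
    have := Submodule.mem_map_of_mem (f := g) (Submodule.subset_span ⟨a, rfl⟩ : M a ∈ rows)
    rwa [hg, Submodule.mem_bot] at this
  conv_rhs => rw [Pi.zero_apply, ← hga, ← (Pi.basisFun K ι).sum_repr (M a)]
  simp [mulVec, dotProduct]

theorem exists_mulVec_eq_zero_forall_ne_zero [Infinite K] (M : Matrix α ι K) {x : ι → L}
    (hx : M.map (algebraMap K L) *ᵥ x = 0) (hx0 : ∀ i, x i ≠ 0) :
    ∃ y : ι → K, M *ᵥ y = 0 ∧ ∀ i, y i ≠ 0 := by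
  have := Module.Dual.exists_forall_mem_ne_zero_of_forall_exists (LinearMap.ker M.mulVecLin)
    (fun i => LinearMap.proj i) fun i => by
      simpa using M.exists_mulVec_eq_zero_apply_ne_zero hx (hx0 i)
  simpa using this

theorem exists_int_mulVec_eq_zero_forall_ne_zero [CharZero L] (M : Matrix α ι ℤ) {x : ι → L}
    (hx : M.map Int.cast *ᵥ x = 0) (hx0 : ∀ i, x i ≠ 0) :
    ∃ z : ι → ℤ, M *ᵥ z = 0 ∧ ∀ i, z i ≠ 0 := by
  obtain ⟨y, hy, hy0⟩ := (M.map (Int.cast : ℤ → ℚ)).exists_mulVec_eq_zero_forall_ne_zero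
    (x := x) (by simpa [Matrix.map_map] using hx) hx0
  obtain ⟨⟨b, hb⟩, hby⟩ := IsLocalization.exist_integer_multiples_of_finite (nonZeroDivisors ℤ) y
  choose z hz using hby
  have hb0 : (b : ℚ) ≠ 0 := by exact_mod_cast nonZeroDivisors.ne_zero hb
  have hzy : ((↑) : ℤ → ℚ) ∘ z = (b : ℚ) • y := funext fun i => by simpa using hz i
  refine ⟨z, funext fun a => Int.cast_injective (α := ℚ) ?_, fun i hi => ?_⟩
  · simpa [hzy, Matrix.mulVec_smul, hy] using (Int.castRingHom ℚ).map_mulVec M z a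
  · simpa [hi, hb0, hy0 i] using (hz i).symm

end Matrix

def configMatrix {d : ℕ} (c : Config d) (s : Finset (Cell d)) : Matrix (Cell d) s ℤ :=
  fun u v => c (u - v)

theorem annihilates_iff_mulVec_eq_zero {d : ℕ} {c : Config d} {f : LP d} {s : Finset (Cell d)}
    (hs : f.coeff.support ⊆ s) :
    Annihilates f c ↔ (configMatrix c s).map Int.cast *ᵥ (fun v : s => f.coeff v) = 0 := by
  simp only [Annihilates, funext_iff, Pi.zero_apply]
  refine forall_congr' fun u => Eq.congr_left ?_
  rw [conv, Finset.sum_subset hs fun v _ hv => by simp [Finsupp.notMem_support_iff.1 hv],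
    ← Finset.sum_coe_sort s]
  simp [configMatrix, mulVec, dotProduct, mul_comm]

/-- If a `d`-dimensional configuration `c : ℤ^d → A` (`A ⊆ ℤ` finite)
has a non-zero annihilator `f` with complex coefficients, then it also has an
annihilator `f'` with integer coefficients satisfying `Supp(f') = Supp(f)`. -/
theorem stmt0 {d : ℕ} (c : Config d)
    (f : LP d) (hann : Annihilates f c) :
    ∃ f' : Cell d →₀ ℤ,
      f'.support = f.coeff.support ∧
      Annihilates (AddMonoidAlgebra.ofCoeff (Finsupp.mapRange (fun n : ℤ => (n : ℂ)) (by simp) f') : LP d) c := by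
  classical
  set s := f.coeff.support
  obtain ⟨z, hz, hz0⟩ := (configMatrix c s).exists_int_mulVec_eq_zero_forall_ne_zero
    ((annihilates_iff_mulVec_eq_zero subset_rfl).1 hann) fun v => Finsupp.mem_support_iff.1 v.2
  set f' : Cell d →₀ ℤ := (Finsupp.equivFunOnFinite.symm z).extendDomain
  have hsupp : f'.support = s := by
    ext u; by_cases hu : u ∈ s <;> simp [f', hu, hz0]
  refine ⟨f', hsupp, (annihilates_iff_mulVec_eq_zero (s := s) ?_).2 <| funext fun u => ?_⟩
  · simp [Finsupp.support_mapRange_of_injective _ _ Int.cast_injective, hsupp]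
  · simpa [f', hz, Function.comp_def] using
      ((Int.castRingHom ℂ).map_mulVec (configMatrix c s) z u).symm
end

section
/- Let X be a d-dimensional subshift and let f ∈ Per(X) satisfy 0 ∈ Supp(f). Let u ∈ ℝ^d be a non-zero vector such that −Supp(f) \ {0} ⊆ H_u, where H_u = {x ∈ ℤ^d : ⟨x,u⟩ < 0}. Then X is deterministic in the direction of u. -/
open scoped BigOperators

/-!
If `c` and `c'` agree on `H_u`, so do `fc` and `fc'`, because `Supp f` lies in the closed half
space `⟨·, u⟩ ≥ 0`. Two strongly periodic configurations share a period `t` with `⟨t, u⟩ < 0`,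
and translating by multiples of `t` moves any cell into `H_u`; hence `fc = fc'`. So `f`
annihilates `c - c'`, which vanishes on `H_u`. Since `f₀ ≠ 0` and the rest of `Supp f` lies
strictly on the positive side, the value of `c - c'` at a cell is determined by its values at
cells strictly lower in direction `u`, and `c - c'` cannot have a lowest nonzero cell.
-/

open Matrix

section

variable {d : ℕ}

lemma det_ne_zero_of_linearIndependent (T : Fin d → Cell d)
    (hT : LinearIndependent ℝ (fun i => (fun j => ((T i j : ℤ) : ℝ)))) :
    (Matrix.of T).det ≠ 0 := by
  have hunit : IsUnit ((Matrix.of T).map (Int.cast : ℤ → ℝ)) :=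
    linearIndependent_rows_iff_isUnit.mp hT
  rw [isUnit_iff_isUnit_det, ← Int.cast_det, isUnit_iff_ne_zero] at hunit
  exact_mod_cast hunit

/-- By Cramer's rule, `det T • w` is an integer combination of the independent periods `T i`. -/
lemma StronglyPeriodic.exists_forall_periodic_zsmul {α : Type*} {e : Cell d → α}
    (he : StronglyPeriodic e) : ∃ m : ℤ, m ≠ 0 ∧ ∀ w, Function.Periodic e (m • w) := by
  obtain ⟨T, hT, hTli⟩ := he
  refine ⟨(Matrix.of T).det, det_ne_zero_of_linearIndependent T hTli, fun w => ?_⟩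
  have hcomb : (Matrix.of T).det • w = ∑ i, (w ᵥ* (Matrix.of T).adjugate) i • T i := by
    have := vecMul_eq_sum (w ᵥ* (Matrix.of T).adjugate) (Matrix.of T)
    rwa [vecMul_vecMul, adjugate_mul, vecMul_smul, vecMul_one] at this
  rw [hcomb]
  exact Finset.sum_induction _ (Function.Periodic e) (fun _ _ => Function.Periodic.add_period)
    (fun x => by simp) fun i _ => Function.Periodic.zsmul (hT i).2 _

lemma StronglyPeriodic.exists_common_period_lt_zero {α β : Type*} {g : Cell d → α}
    {g' : Cell d → β} (hg : StronglyPeriodic g) (hg' : StronglyPeriodic g') (φ : Cell d →+ ℝ) {w : Cell d}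
    (hw : φ w ≠ 0) :
    ∃ t, φ t < 0 ∧ Function.Periodic g t ∧ Function.Periodic g' t := by
  obtain ⟨m, hm, hmg⟩ := hg.exists_forall_periodic_zsmul
  obtain ⟨m', hm', hmg'⟩ := hg'.exists_forall_periodic_zsmul
  set s := (m * m') • w
  have hs : Function.Periodic g s ∧ Function.Periodic g' s := by
    refine ⟨?_, ?_⟩
    · simpa only [s, mul_smul] using hmg (m' • w)
    · rw [show s = m' • m • w by rw [← mul_smul, mul_comm]]
      exact hmg' _
  have hφs : φ s ≠ 0 := by
    rw [map_zsmul]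
    exact smul_ne_zero (mul_ne_zero hm hm') hw
  rcases hφs.lt_or_gt with hneg | hpos
  · exact ⟨s, hneg, hs⟩
  · exact ⟨-s, by simpa using hpos, hs.1.neg, hs.2.neg⟩

lemma eq_of_eqOn_neg_of_periodic {α : Type*} {g g' : Cell d → α} (φ : Cell d →+ ℝ) {t : Cell d}
    (ht : φ t < 0) (hg : Function.Periodic g t) (hg' : Function.Periodic g' t)
    (h : ∀ x, φ x < 0 → g x = g' x) : g = g' := by
  funext x
  obtain ⟨n, hn⟩ := exists_lt_nsmul (neg_pos.mpr ht) (φ x)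
  have hxn : φ (x + n • t) < 0 := by
    rw [nsmul_eq_mul] at hn
    rw [map_add, map_nsmul, nsmul_eq_mul]
    linarith
  calc g x = g (x + n • t) := (hg.nsmul n x).symm
    _ = g' (x + n • t) := h _ hxn
    _ = g' x := hg'.nsmul n x

lemma conv_eqOn_neg {f : LP d} {c c' : Config d} (φ : Cell d →+ ℝ)
    (hf : ∀ v ∈ f.coeff.support, 0 ≤ φ v) (h : ∀ x, φ x < 0 → c x = c' x) :
    ∀ x, φ x < 0 → conv f c x = conv f c' x := by
  intro x hx
  refine Finset.sum_congr rfl fun v hv => ?_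
  rw [h (x - v) (by rw [map_sub]; linarith [hf v hv])]

lemma conv_sub (f : LP d) (c c' : Config d) : conv f (c - c') = conv f c - conv f c' := by
  funext x
  simp only [conv, Pi.sub_apply, Int.cast_sub, mul_sub, Finset.sum_sub_distrib]

lemma Annihilates.apply_eq_zero {f : LP d} {e : Config d} (he : Annihilates f e)
    (h0 : (0 : Cell d) ∈ f.coeff.support) {x : Cell d}
    (hx : ∀ v ∈ f.coeff.support.erase 0, e (x - v) = 0) : e x = 0 := by
  have hsum := he x
  rw [conv, ← Finset.add_sum_erase _ _ h0,
    Finset.sum_eq_zero fun v hv => by rw [hx v hv, Int.cast_zero, mul_zero], add_zero,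
    sub_zero, mul_eq_zero] at hsum
  exact_mod_cast hsum.resolve_left (Finsupp.mem_support_iff.mp h0)

lemma Finset.exists_pos_forall_le {ι : Type*} (s : Finset ι) {g : ι → ℝ}
    (h : ∀ i ∈ s, 0 < g i) : ∃ ε > 0, ∀ i ∈ s, ε ≤ g i := by
  rcases s.eq_empty_or_nonempty with rfl | hs
  · exact ⟨1, one_pos, by simp⟩
  · exact ⟨s.inf' hs g, (Finset.lt_inf'_iff hs).2 h, fun i hi => Finset.inf'_le g hi⟩

/-- A nonzero cell whose `φ`-value is within `ε` of the infimum over all nonzero cells would be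
forced to vanish by the cells `x - v`, which lie below that infimum. -/
lemma Annihilates.eq_zero_of_eqOn_neg {f : LP d} {e : Config d} (he : Annihilates f e)
    (φ : Cell d →+ ℝ) (h0 : (0 : Cell d) ∈ f.coeff.support)
    (hpos : ∀ v ∈ f.coeff.support, v ≠ 0 → 0 < φ v) (hzero : ∀ x, φ x < 0 → e x = 0) :
    e = 0 := by
  obtain ⟨ε, hε, hεle⟩ := (f.coeff.support.erase 0).exists_pos_forall_le (g := φ)
    fun v hv => hpos v (Finset.mem_of_mem_erase hv) (Finset.ne_of_mem_erase hv)
  by_contra hne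
  obtain ⟨x₀, hx₀⟩ := Function.ne_iff.mp hne
  set E := φ '' {x | e x ≠ 0}
  have hbdd : BddBelow E := by
    refine ⟨0, ?_⟩
    rintro _ ⟨x, hx, rfl⟩
    exact not_lt.mp fun hlt => hx (hzero x hlt)
  obtain ⟨_, ⟨x, hx, rfl⟩, hxE⟩ :=
    exists_lt_of_csInf_lt (⟨φ x₀, x₀, hx₀, rfl⟩ : E.Nonempty) (lt_add_of_pos_right (sInf E) hε)
  refine hx (he.apply_eq_zero h0 fun v hv => ?_)
  by_contra hxv
  have := csInf_le hbdd ⟨x - v, hxv, rfl⟩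
  rw [map_sub] at this
  linarith [hεle v hv]

noncomputable def latticePairing (u : EuclideanSpace ℝ (Fin d)) : Cell d →+ ℝ :=
  AddMonoidHom.mk' (fun x => inner ℝ (toR x) u) fun x y => by
    simp only [toR, Pi.add_apply, Int.cast_add]
    rw [← inner_add_left]
    rfl

lemma latticePairing_exists_ne_zero {u : EuclideanSpace ℝ (Fin d)} (hu : u ≠ 0) :
    ∃ w, latticePairing u w ≠ 0 := by
  contrapose! hu
  ext i
  simpa [latticePairing, toR, PiLp.inner_apply, Pi.single_apply] using hu (Pi.single i 1)

end

theorem stmt5_general {d : ℕ} (X : Set (Config d))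
    (f : LP d) (hf : PerX f X) (h0 : (0 : Cell d) ∈ f.coeff.support)
    (u : EuclideanSpace ℝ (Fin d)) (hu : u ≠ 0)
    (hH : ∀ v ∈ f.coeff.support, v ≠ 0 → (inner ℝ (toR (-v)) u : ℝ) < 0) :
    Deterministic X u := by
  set φ := latticePairing u
  have hpos : ∀ v ∈ f.coeff.support, v ≠ 0 → 0 < φ v := fun v hv hv0 =>
    neg_lt_zero.mp (map_neg φ v ▸ hH v hv hv0)
  have hnonneg : ∀ v ∈ f.coeff.support, 0 ≤ φ v := fun v hv => by
    rcases eq_or_ne v 0 with rfl | hv0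
    · simp
    · exact (hpos v hv hv0).le
  intro c hc c' hc' hagree
  obtain ⟨w, hw⟩ := latticePairing_exists_ne_zero hu
  obtain ⟨t, ht, hpt, hpt'⟩ := (hf c hc).exists_common_period_lt_zero (hf c' hc') φ hw
  have hconv : conv f c = conv f c' :=
    eq_of_eqOn_neg_of_periodic φ ht hpt hpt' (conv_eqOn_neg φ hnonneg hagree)
  have hann : Annihilates f (c - c') := fun x => by rw [conv_sub, hconv, Pi.sub_apply, sub_self]
  exact sub_eq_zero.mp <|
    hann.eq_zero_of_eqOn_neg φ h0 hpos fun x hx => sub_eq_zero.mpr (hagree x hx)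

/-- If a subshift `X` has a periodizer `f` with `0 ∈ Supp(f)` and
`-Supp(f) \ {0} ⊆ H_u` for a non-zero `u ∈ ℝ^d`, then `X` is deterministic in the
direction of `u`. -/
theorem stmt5 {d : ℕ} (X : Set (Config d)) (hX : IsSubshift X) (hA : FiniteAlphabet X)
    (f : LP d) (hf : PerX f X) (h0 : (0 : Cell d) ∈ f.coeff.support)
    (u : EuclideanSpace ℝ (Fin d)) (hu : u ≠ 0)
    (hH : ∀ v ∈ f.coeff.support, v ≠ 0 → (inner ℝ (toR (-v)) u : ℝ) < 0) :
    Deterministic X u :=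
  stmt5_general X f hf h0 u hu hH
end

section
/- Let X be a d-dimensional subshift and u ∈ ℝ^d non-zero. If for all c, c' ∈ X the equality of restrictions c|_{H_u} = c'|_{H_u} implies c_0 = c'_0 (agreement at the origin), then X is deterministic in the direction of u, i.e., c|_{H_u} = c'|_{H_u} implies c = c'. -/
open scoped BigOperators

/-! If `c ≠ c'` agree on `H_u`, let `m` be the infimum of `⟨y, u⟩` over the cells `y` where they
differ, so that they agree wherever `⟨z, u⟩ < m`. Recentre both configurations at disagreement
cells `y_n` with `⟨y_n, u⟩ → m` and pass to a limit pair `(e, e')` in the compact set `X × X`.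
Then `e` and `e'` agree on `H_u` but differ at the origin, contradicting the hypothesis. -/

open Filter Topology

lemma toR_add {d : ℕ} (a b : Cell d) : toR (a + b) = toR a + toR b := by
  ext i
  simp [toR]

lemma FiniteAlphabet.isCompact {d : ℕ} {X : Set (Config d)} (hA : FiniteAlphabet X)
    (hX : IsClosed X) : IsCompact X := by
  obtain ⟨A, hA⟩ := hA
  exact (isCompact_univ_pi fun _ => A.finite_toSet.isCompact).of_isClosed_subset hX
    fun c hc v _ => hA c hc v

lemma exists_seq_mem_tendsto_sInf_image {ι α : Type*} [ConditionallyCompleteLinearOrder α]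
    [TopologicalSpace α] [OrderTopology α] [FirstCountableTopology α] {f : ι → α} {S : Set ι}
    (hS : S.Nonempty) (hbdd : BddBelow (f '' S)) :
    ∃ y : ℕ → ι, (∀ n, y n ∈ S) ∧ Tendsto (f ∘ y) atTop (𝓝 (sInf (f '' S))) := by
  obtain ⟨s, -, hs, hsS⟩ := exists_seq_tendsto_sInf (hS.image f) hbdd
  choose y hyS hys using hsS
  exact ⟨y, hyS, by simpa only [Function.comp_def, hys] using hs⟩

lemma apply_eq_apply_iff_eventually_of_tendsto {ι α β : Type*} [TopologicalSpace β]
    [DiscreteTopology β] {l : Filter ι} [l.NeBot] {p : ι → (α → β) × (α → β)} {e e' : α → β}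
    (h : Tendsto p l (𝓝 (e, e'))) (x : α) :
    e x = e' x ↔ ∀ᶠ n in l, (p n).1 x = (p n).2 x := by
  have hx : ∀ᶠ n in l, (p n).1 x = e x ∧ (p n).2 x = e' x := by
    have h₁ := tendsto_pi_nhds.mp h.fst_nhds x
    have h₂ := tendsto_pi_nhds.mp h.snd_nhds x
    rw [nhds_discrete, tendsto_pure] at h₁ h₂
    exact h₁.and h₂
  constructor
  · intro hee'
    filter_upwards [hx] with n ⟨h₁, h₂⟩
    rw [h₁, h₂, hee']
  · intro hp
    obtain ⟨n, ⟨h₁, h₂⟩, h₁₂⟩ := (hx.and hp).exists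
    rw [← h₁, ← h₂, h₁₂]

lemma exists_disagreement_seq_tendsto_front {d : ℕ} {c c' : Config d}
    {u : EuclideanSpace ℝ (Fin d)} (hagree : ∀ x : Cell d, inner ℝ (toR x) u < 0 → c x = c' x)
    (hne : c ≠ c') :
    ∃ m : ℝ, (∀ z : Cell d, inner ℝ (toR z) u < m → c z = c' z) ∧
      ∃ y : ℕ → Cell d, (∀ n, c (y n) ≠ c' (y n)) ∧
        Tendsto (fun n => inner ℝ (toR (y n)) u) atTop (𝓝 m) := by
  set front := (fun y => inner ℝ (toR y) u) '' {y | c y ≠ c' y}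
  have hbdd : BddBelow front := by
    refine ⟨0, ?_⟩
    rintro _ ⟨y, hy, rfl⟩
    exact not_lt.mp fun hlt => hy (hagree y hlt)
  obtain ⟨y, hy, hyfront⟩ := exists_seq_mem_tendsto_sInf_image (Function.ne_iff.mp hne) hbdd
  exact ⟨sInf front, fun z hz => not_not.mp fun hzS => notMem_of_lt_csInf hz hbdd ⟨z, hzS, rfl⟩,
    y, hy, hyfront⟩

theorem stmt6_general {d : ℕ} (X : Set (Config d)) (hX : IsSubshift X) (hA : FiniteAlphabet X)
    (u : EuclideanSpace ℝ (Fin d))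
    (h0 : ∀ c ∈ X, ∀ c' ∈ X,
      (∀ x : Cell d, (inner ℝ (toR x) u : ℝ) < 0 → c x = c' x) → c 0 = c' 0) :
    Deterministic X u := by
  intro c hc c' hc' hagree
  by_contra hne
  obtain ⟨m, hbehind, y, hy, hym⟩ := exists_disagreement_seq_tendsto_front hagree hne
  have hXc := hA.isCompact hX.1
  obtain ⟨⟨e, e'⟩, ⟨he, he'⟩, φ, hφ, hlim⟩ := (hXc.prod hXc).tendsto_subseq
    (x := fun n => (shift (y n) c, shift (y n) c')) fun n => ⟨hX.2 c hc _, hX.2 c' hc' _⟩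
  have hlimit := apply_eq_apply_iff_eventually_of_tendsto hlim
  refine (hlimit 0).not.mpr ?_ (h0 e he e' he' fun x hx => (hlimit x).mpr ?_)
  · refine not_eventually.mpr (.of_forall fun n => ?_)
    show c (0 + y (φ n)) ≠ c' (0 + y (φ n))
    rw [zero_add]
    exact hy (φ n)
  · have hnear := (hym.comp hφ.tendsto_atTop).eventually_lt_const
      (by linarith : m < m - inner ℝ (toR x) u)
    filter_upwards [hnear] with n hn
    apply hbehind
    rw [toR_add, inner_add_left]
    simp only [Function.comp_apply] at hn
    linarith

/-- If for all `c, c' ∈ X` agreement on the half space `H_u` implies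
agreement at the origin, then `X` is deterministic in the direction of `u`. -/
theorem stmt6 {d : ℕ} (X : Set (Config d)) (hX : IsSubshift X) (hA : FiniteAlphabet X)
    (u : EuclideanSpace ℝ (Fin d)) (hu : u ≠ 0)
    (h0 : ∀ c ∈ X, ∀ c' ∈ X,
      (∀ x : Cell d, (inner ℝ (toR x) u : ℝ) < 0 → c x = c' x) → c 0 = c' 0) :
    Deterministic X u :=
  stmt6_general X hX hA u h0
end

section
/- Let D = {(0,0,0), (1,0,0), (0,1,0), (0,0,1)} ⊆ ℤ^3 and let a ∈ {0,1}^{ℤ^2} be a tiling of ℤ^2 by the 2×2 square tile S = {(0,0),(0,1),(1,0),(1,1)}. Define c ∈ {0,1}^{ℤ^3} by c(x_1,x_2,x_3) = a(x_1+x_3, x_2+x_3). Then c is a tiling of ℤ^3 by D, c is (1,1,−1)-periodic, the slice (x_1,x_2) ↦ c(x_1,x_2,0) equals a, and if a is not strongly periodic then c is not strongly periodic. -/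
open scoped BigOperators

/-!
Write `c = a ∘ π` with `π(x₁,x₂,x₃) = (x₁+x₃, x₂+x₃)`, an integer matrix map that is surjective
on lattices, sends `D` bijectively onto the square and kills `(1,1,-1)`. Pulling back along
such a map turns tilings into tilings, and a period `t` of `c` with `π t ≠ 0` pushes forward
to the period `π t` of `a`. Since `π` extends to a surjective linear map `ℝ³ → ℝ²`, the images
of three independent periods of `c` span `ℝ²`, so two of them are independent periods of `a`.
-/

open Matrix

open Module Submodule in
theorem exists_linearIndependent_comp_of_span_eq_top {K V ι : Type*} [DivisionRing K]
    [AddCommGroup V] [Module K V] [FiniteDimensional K V] {n : ℕ} (hn : finrank K V = n)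
    (v : ι → V) (hv : span K (Set.range v) = ⊤) :
    ∃ f : Fin n → ι, LinearIndependent K (v ∘ f) := by
  obtain ⟨κ, a, -, hsp, hli⟩ := exists_linearIndependent' K v
  let b : Basis κ K V := .mk hli (by rw [hsp, hv])
  have : Fintype κ := b.fintypeIndexOfRankLtAleph0 (Module.rank_lt_aleph0 K V)
  let e : Fin n ≃ κ := (Fintype.equivFinOfCardEq (hn ▸ (finrank_eq_card_basis b).symm)).symm
  exact ⟨a ∘ e, hli.comp e e.injective⟩

namespace Matrix

theorem map_intCast_mulVec {R ι κ : Type*} [Ring R] [Fintype κ] (M : Matrix ι κ ℤ)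
    (v : κ → ℤ) : M.map (Int.cast : ℤ → R) *ᵥ (Int.cast ∘ v) = Int.cast ∘ (M *ᵥ v) :=
  funext fun i => (RingHom.map_mulVec (Int.castRingHom R) M v i).symm

theorem range_mulVecLin_map_intCast_eq_top {R ι κ : Type*} [CommRing R] [Fintype κ]
    [Fintype ι] [DecidableEq ι] (M : Matrix ι κ ℤ) (hM : Function.Surjective (M *ᵥ ·)) :
    LinearMap.range (M.map (Int.cast : ℤ → R)).mulVecLin = ⊤ := by
  rw [eq_top_iff, ← (Pi.basisFun R ι).span_eq, Submodule.span_le]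
  rintro _ ⟨i, rfl⟩
  obtain ⟨u, hu : M *ᵥ u = Pi.single i 1⟩ := hM (Pi.single i 1)
  refine ⟨Int.cast ∘ u, ?_⟩
  rw [mulVecLin_apply, map_intCast_mulVec, hu]
  ext j
  simp [Pi.single_apply]

variable {m n : ℕ} {α : Type*} (M : Matrix (Fin n) (Fin m) ℤ)

theorem isTiling_comp_mulVec {S : Finset (Cell n)} {D : Finset (Cell m)} {a : Config n}
    (hD : Set.InjOn (M *ᵥ ·) D) (hS : D.image (M *ᵥ ·) = S) (ha : IsTiling S a) :
    IsTiling D (a ∘ (M *ᵥ ·)) := by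
  refine ⟨fun u => ha.1 _, fun u => ?_⟩
  rw [← ha.2 (M *ᵥ u), ← hS, Finset.sum_image hD]
  simp only [Function.comp_apply, mulVec_sub]

theorem isPeriodOf_comp_mulVec {a : Cell n → α} {t : Cell m} (ht : t ≠ 0) (hMt : M *ᵥ t = 0) :
    IsPeriodOf (a ∘ (M *ᵥ ·)) t :=
  ⟨ht, fun u => by simp only [Function.comp_apply, mulVec_add, hMt, add_zero]⟩

theorem isPeriodOf_mulVec {a : Cell n → α} (hM : Function.Surjective (M *ᵥ ·)) {t : Cell m}
    (ht : IsPeriodOf (a ∘ (M *ᵥ ·)) t) (hMt : M *ᵥ t ≠ 0) : IsPeriodOf a (M *ᵥ t) := by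
  refine ⟨hMt, fun w => ?_⟩
  obtain ⟨u, rfl⟩ := hM w
  simpa only [Function.comp_apply, mulVec_add] using ht.2 u

end Matrix

open Submodule in
theorem StronglyPeriodic.of_comp_mulVec {m n : ℕ} {α : Type*} {a : Cell n → α}
    (M : Matrix (Fin n) (Fin m) ℤ) (hM : Function.Surjective (M *ᵥ ·))
    (h : StronglyPeriodic (a ∘ (M *ᵥ ·))) : StronglyPeriodic a := by
  obtain ⟨T, hT, hli⟩ := h
  have hspanT : span ℝ (Set.range fun i j => (T i j : ℝ)) = ⊤ :=
    hli.span_eq_top_of_card_eq_finrank' (by simp)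
  have hspan : span ℝ (Set.range fun i => (Int.cast : ℤ → ℝ) ∘ (M *ᵥ T i)) = ⊤ := by
    have hcomp : (fun i => (Int.cast : ℤ → ℝ) ∘ (M *ᵥ T i)) =
        (M.map (Int.cast : ℤ → ℝ)).mulVecLin ∘ fun i j => (T i j : ℝ) :=
      funext fun i => (M.map_intCast_mulVec (T i)).symm
    rw [hcomp, Set.range_comp, ← map_span, hspanT, Submodule.map_top,
      M.range_mulVecLin_map_intCast_eq_top hM]
  obtain ⟨f, hf⟩ :=
    exists_linearIndependent_comp_of_span_eq_top (Module.finrank_fin_fun ℝ) _ hspan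
  refine ⟨fun i => M *ᵥ T (f i), fun i => M.isPeriodOf_mulVec hM (hT (f i)) fun h0 => ?_, hf⟩
  exact hf.ne_zero i (by simp [h0])

/-- From a tiling `a` of `ℤ²` by the `2×2` square, the configuration
`c(x₁,x₂,x₃) = a(x₁+x₃, x₂+x₃)` is a `(1,1,-1)`-periodic tiling of `ℤ³` by the tetromino
`D = {(0,0,0),(1,0,0),(0,1,0),(0,0,1)}` whose slice at `x₃ = 0` equals `a`, and if `a`
is not strongly periodic then neither is `c`. -/
theorem stmt15 (a : Config 2)
    (ha : IsTiling ({![0,0], ![0,1], ![1,0], ![1,1]} : Finset (Cell 2)) a)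
    (c : Config 3) (hc : ∀ u : Cell 3, c u = a ![u 0 + u 2, u 1 + u 2]) :
    IsTiling ({![0,0,0], ![1,0,0], ![0,1,0], ![0,0,1]} : Finset (Cell 3)) c ∧
    IsPeriodOf c ![1,1,-1] ∧
    (∀ x1 x2 : ℤ, c ![x1, x2, 0] = a ![x1, x2]) ∧
    (¬ StronglyPeriodic a → ¬ StronglyPeriodic c) := by
  set M : Matrix (Fin 2) (Fin 3) ℤ := !![1, 0, 1; 0, 1, 1]
  have hM : ∀ u, M *ᵥ u = ![u 0 + u 2, u 1 + u 2] := fun u => by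
    ext i; fin_cases i <;> simp [M, mulVec, dotProduct, Fin.sum_univ_three]
  obtain rfl : c = a ∘ (M *ᵥ ·) := funext fun u => by simp only [hc, Function.comp_apply, hM]
  have himage : ({![0,0,0], ![1,0,0], ![0,1,0], ![0,0,1]} : Finset (Cell 3)).image (M *ᵥ ·) =
      {![0,0], ![0,1], ![1,0], ![1,1]} := by
    simp only [hM]
    decide
  have hsurj : Function.Surjective (M *ᵥ ·) := fun w =>
    ⟨![w 0, w 1, 0], by ext i; fin_cases i <;> simp [hM]⟩
  refine ⟨M.isTiling_comp_mulVec (Finset.injOn_of_card_image_eq (by rw [himage]; rfl)) himage ha,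
    M.isPeriodOf_comp_mulVec (by decide) (by simp [hM]), fun x1 x2 => by simp [hM],
    mt (StronglyPeriodic.of_comp_mulVec M hsurj)⟩
end
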